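/- For any measurable set M with 0 < μ(M) < ∞ and any p ≥ 1, liminf_{q→∞} ‖χ_M‖_{B_{p,q}} ≥ 1, where B_{p,q}(t) = t^p (log(e-1+t))^q. -/

import Mathlib

open MeasureTheory Filter Real Topology ENNReal

noncomputable def e0 : ℝ := Real.exp 1 - 1

noncomputable def Bpq (p q t : ℝ) : ℝ := t ^ p * (Real.log (e0 + t)) ^ q

noncomputable def BpqBar (p q t : ℝ) : ℝ := t ^ p * (Real.log (Real.exp 1 + t)) ^ q

/-- The Luxemburg norm of `f` with respect to the Young function `A`. -/
noncomputable def luxNorm {X : Type*} [MeasurableSpace X] (μ : Measure X)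
    (A : ℝ → ℝ) (f : X → ℝ) : ℝ≥0∞ :=
  sInf {lam : ℝ≥0∞ | 0 < lam ∧ lam ≠ ∞ ∧
    ∫⁻ x, ENNReal.ofReal (A (|f x| / lam.toReal)) ∂μ ≤ 1}

/-- `A` is a Young function: continuous, convex, increasing on `[0,∞)`,
`A 0 = 0` and `A t / t → ∞`. -/
def IsYoung (A : ℝ → ℝ) : Prop :=
  ContinuousOn A (Set.Ici 0) ∧ ConvexOn ℝ (Set.Ici 0) A ∧ MonotoneOn A (Set.Ici 0) ∧
    A 0 = 0 ∧ Tendsto (fun t => A t / t) atTop atTop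

/-! If `λ` is admissible for `χ_M`, then `B_{p,q}(1/λ) μ(M) ≤ 1`. For `λ < s < 1` we have
`B_{p,q}(1/λ) ≥ (log (e₀ + 1/s))^q`, and `log (e₀ + 1/s) > log e = 1`, so this lower bound
blows up as `q → ∞`: for large `q` no `λ < s` is admissible, i.e. `‖χ_M‖_{B_{p,q}} ≥ s`. -/

theorem le_luxNorm_of_forall_lt {X : Type*} [MeasurableSpace X] {μ : Measure X}
    {A : ℝ → ℝ} {f : X → ℝ} {c : ℝ≥0∞}
    (h : ∀ lam : ℝ≥0∞, 0 < lam → lam < c →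
      1 < ∫⁻ x, ENNReal.ofReal (A (|f x| / lam.toReal)) ∂μ) :
    c ≤ luxNorm μ A f := by
  refine le_sInf fun lam ⟨hlam0, _, hint⟩ => ?_
  by_contra hlt
  exact (h lam hlam0 (not_le.1 hlt)).not_ge hint

theorem ofReal_mul_le_lintegral_indicator_one {X : Type*} [MeasurableSpace X] (μ : Measure X)
    (A : ℝ → ℝ) {M : Set X} (hM : MeasurableSet M) (r : ℝ) :
    ENNReal.ofReal (A (1 / r)) * μ M ≤
      ∫⁻ x, ENNReal.ofReal (A (|M.indicator (fun _ => (1 : ℝ)) x| / r)) ∂μ := by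
  rw [← lintegral_indicator_const hM]
  refine lintegral_mono fun x => ?_
  by_cases hx : x ∈ M <;> simp [hx]

theorem one_lt_log_e0_add {t : ℝ} (ht : 1 < t) : 1 < Real.log (e0 + t) := by
  rw [lt_log_iff_exp_lt (by unfold e0; linarith [exp_pos 1])]
  unfold e0
  linarith

theorem rpow_log_e0_add_le_Bpq {p q s t : ℝ} (hp : 0 ≤ p) (hq : 0 ≤ q) (hs : 1 < s)
    (hst : s ≤ t) : Real.log (e0 + s) ^ q ≤ Bpq p q t := by
  have hlog : 0 ≤ Real.log (e0 + s) := zero_le_one.trans (one_lt_log_e0_add hs).le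
  have hlog_mono : Real.log (e0 + s) ≤ Real.log (e0 + t) :=
    log_le_log (by unfold e0; linarith [exp_pos 1]) (by linarith)
  calc Real.log (e0 + s) ^ q ≤ Real.log (e0 + t) ^ q := rpow_le_rpow hlog hlog_mono hq
    _ ≤ t ^ p * Real.log (e0 + t) ^ q :=
      le_mul_of_one_le_left (rpow_nonneg (hlog.trans hlog_mono) q)
        (one_le_rpow (by linarith) hp)

theorem eventually_ofReal_le_luxNorm_Bpq_indicator_one {X : Type*} [MeasurableSpace X]
    {μ : Measure X} {M : Set X} (hM : MeasurableSet M) (hM0 : 0 < μ M) {p : ℝ} (hp : 0 ≤ p)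
    {s : ℝ} (hs0 : 0 < s) (hs1 : s < 1) :
    ∀ᶠ q in atTop, ENNReal.ofReal s ≤ luxNorm μ (Bpq p q) (M.indicator fun _ => (1 : ℝ)) := by
  have hs : 1 < 1 / s := one_lt_one_div hs0 hs1
  have hlarge :
      Tendsto (fun q : ℝ => ENNReal.ofReal (Real.log (e0 + 1 / s) ^ q) * μ M) atTop (𝓝 ∞) := by
    have h := ENNReal.Tendsto.mul_const (b := μ M) (ENNReal.tendsto_ofReal_atTop.comp
      (tendsto_rpow_atTop_of_base_gt_one _ (one_lt_log_e0_add hs))) (Or.inl top_ne_zero)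
    rwa [top_mul hM0.ne'] at h
  filter_upwards [hlarge.eventually_const_lt one_lt_top, eventually_ge_atTop 0]
    with q hq1 hq0
  refine le_luxNorm_of_forall_lt fun lam hlam0 hlam => ?_
  have hr0 : 0 < lam.toReal := ENNReal.toReal_pos hlam0.ne' (hlam.trans_le le_top).ne
  have hrs : lam.toReal < s := ENNReal.toReal_lt_of_lt_ofReal hlam
  calc 1 < ENNReal.ofReal (Real.log (e0 + 1 / s) ^ q) * μ M := hq1
    _ ≤ ENNReal.ofReal (Bpq p q (1 / lam.toReal)) * μ M := by
      gcongr
      exact rpow_log_e0_add_le_Bpq hp hq0 hs (one_div_le_one_div_of_le hr0 hrs.le)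
    _ ≤ _ := ofReal_mul_le_lintegral_indicator_one μ _ hM _

theorem stmt4_general {X : Type*} [MeasurableSpace X] (μ : Measure X)
    (M : Set X) (hM : MeasurableSet M) (hM0 : 0 < μ M)
    (p : ℝ) (hp : 1 ≤ p) :
    (1 : ℝ≥0∞) ≤ Filter.liminf
      (fun q : ℝ => luxNorm μ (Bpq p q) (M.indicator (fun _ => (1 : ℝ)))) atTop := by
  rw [le_liminf_iff]
  intro b hb
  obtain ⟨s, -, hbs, hs1⟩ := ENNReal.lt_iff_exists_real_btwn.1 hb
  have hs0 : 0 < s := ENNReal.ofReal_pos.1 (bot_le.trans_lt hbs)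
  filter_upwards [eventually_ofReal_le_luxNorm_Bpq_indicator_one hM hM0
    (zero_le_one.trans hp) hs0 (ENNReal.ofReal_lt_one.1 hs1)] with q hq
  exact hbs.trans_le hq

theorem stmt4 {X : Type*} [MeasurableSpace X] (μ : Measure X)
    (M : Set X) (hM : MeasurableSet M) (hM0 : 0 < μ M) (hMfin : μ M < ∞)
    (p : ℝ) (hp : 1 ≤ p) :
    (1 : ℝ≥0∞) ≤ Filter.liminf
      (fun q : ℝ => luxNorm μ (Bpq p q) (M.indicator (fun _ => (1 : ℝ)))) atTop :=
  stmt4_general μ M hM hM0 p hp
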